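/- With the setup of the corank-1 distribution (X_i = ∂_{x_i} + A_i∂_{x_{n+1}}, A_i depending only on x₁,…,x_n, ∂_{x_i}A_j − ∂_{x_j}A_i = c_{ij} constant): if u ∈ C³(Ω) satisfies X_j u = ã_j for C² functions ã_j (j = 1,…,n), then for all i,j,k = 1,…,n, X_k X_i ã_j − X_k X_j ã_i = c_{ij} ∂_{x_{n+1}} ã_k on Ω. -/

import Mathlib

open Filter Topology

noncomputable def pd {m : ℕ} (i : Fin m) (f : (Fin m → ℝ) → ℝ) (x : Fin m → ℝ) : ℝ :=
  fderiv ℝ f x (Pi.single i 1)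

/-- The vector field `X_i = ∂_{x_i} + A_i ∂_{x_{n+1}}` acting on functions. -/
noncomputable def Xop {n : ℕ} (A : Fin n → (Fin (n + 1) → ℝ) → ℝ) (i : Fin n)
    (f : (Fin (n + 1) → ℝ) → ℝ) (x : Fin (n + 1) → ℝ) : ℝ :=
  pd i.castSucc f x + A i x * pd (Fin.last n) f x

lemma pd_congr {m : ℕ} {i : Fin m} {f g : (Fin m → ℝ) → ℝ} {x : Fin m → ℝ}
    (h : f =ᶠ[𝓝 x] g) : pd i f x = pd i g x := by
  unfold pd; rw [h.fderiv_eq]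

lemma pd_add {m : ℕ} (i : Fin m) {f g : (Fin m → ℝ) → ℝ} {x : Fin m → ℝ}
    (hf : DifferentiableAt ℝ f x) (hg : DifferentiableAt ℝ g x) :
    pd i (fun y => f y + g y) x = pd i f x + pd i g x := by
  unfold pd; rw [fderiv_fun_add hf hg]; simp

lemma pd_mul {m : ℕ} (i : Fin m) {f g : (Fin m → ℝ) → ℝ} {x : Fin m → ℝ}
    (hf : DifferentiableAt ℝ f x) (hg : DifferentiableAt ℝ g x) :
    pd i (fun y => f y * g y) x = f x * pd i g x + g x * pd i f x := by
  unfold pd; rw [fderiv_fun_mul hf hg]; simp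

lemma pd_const_mul {m : ℕ} (i : Fin m) {g : (Fin m → ℝ) → ℝ} {x : Fin m → ℝ}
    (hg : DifferentiableAt ℝ g x) (r : ℝ) :
    pd i (fun y => r * g y) x = r * pd i g x := by
  unfold pd; rw [fderiv_const_mul hg]; simp

lemma pd_differentiableAt {m : ℕ} {f : (Fin m → ℝ) → ℝ} {x : Fin m → ℝ}
    (hf : ContDiffAt ℝ 2 f x) (q : Fin m) : DifferentiableAt ℝ (pd q f) x := by
  have h : ContDiffAt ℝ 1 (fderiv ℝ f) x := hf.fderiv_right (le_refl 2)
  exact (h.differentiableAt one_ne_zero).clm_apply (differentiableAt_const _)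

lemma pd_symm {m : ℕ} {f : (Fin m → ℝ) → ℝ} {x : Fin m → ℝ}
    (hf : ContDiffAt ℝ 2 f x) (p q : Fin m) :
    pd p (pd q f) x = pd q (pd p f) x := by
  have hsymm := hf.isSymmSndFDerivAt (by simp [minSmoothness_of_isRCLikeNormedField])
  have hd : DifferentiableAt ℝ (fderiv ℝ f) x :=
    (hf.fderiv_right (m := 1) (le_refl 2)).differentiableAt one_ne_zero
  have h1 : ∀ v w : Fin m → ℝ, fderiv ℝ (fun y => fderiv ℝ f y v) x w
      = fderiv ℝ (fderiv ℝ f) x w v := by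
    intro v w
    rw [fderiv_clm_apply hd (differentiableAt_const v)]
    simp
  unfold pd
  rw [h1, h1, hsymm]

lemma pd_last_zero {n : ℕ} {f : (Fin (n+1) → ℝ) → ℝ} (hf : Differentiable ℝ f)
    (hdep : ∀ (x y : Fin (n+1) → ℝ), (∀ j : Fin n, x j.castSucc = y j.castSucc) → f x = f y)
    (x : Fin (n+1) → ℝ) : pd (Fin.last n) f x = 0 := by
  set P : (Fin (n+1) → ℝ) →L[ℝ] (Fin (n+1) → ℝ) :=
    ContinuousLinearMap.id ℝ _ -
      (ContinuousLinearMap.proj (Fin.last n)).smulRight (Pi.single (Fin.last n) 1) with hP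
  have hPapp : ∀ y : Fin (n+1) → ℝ,
      P y = y - (y (Fin.last n)) • (Pi.single (Fin.last n) 1 : Fin (n+1) → ℝ) := by
    intro y; simp [hP]
  have hfP : f = fun y => f (P y) := by
    funext y
    apply hdep
    intro j
    rw [hPapp]
    have : (Pi.single (Fin.last n) (1:ℝ) : Fin (n+1) → ℝ) j.castSucc = 0 := by
      simp [(Fin.castSucc_lt_last j).ne]
    simp [this]
  have hPe : P (Pi.single (Fin.last n) 1) = 0 := by
    rw [hPapp]
    simp
  have hcomp : fderiv ℝ (fun y => f (P y)) x = (fderiv ℝ f (P x)).comp P :=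
    (((hf (P x)).hasFDerivAt).comp x (P.hasFDerivAt)).fderiv
  unfold pd
  conv_lhs => rw [hfP]
  rw [hcomp]
  simp [hPe]

lemma pd_contDiffOn {m : ℕ} {f : (Fin m → ℝ) → ℝ} {Ω : Set (Fin m → ℝ)} (hΩ : IsOpen Ω)
    {p q : WithTop ℕ∞} (hf : ContDiffOn ℝ q f Ω) (hpq : p + 1 ≤ q) (i : Fin m) :
    ContDiffOn ℝ p (pd i f) Ω :=
  (hf.fderiv_of_isOpen hΩ hpq).clm_apply contDiffOn_const

lemma Xop_contDiffOn {n : ℕ} {A : Fin n → (Fin (n + 1) → ℝ) → ℝ}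
    (hA : ∀ i, ContDiff ℝ (⊤ : ℕ∞) (A i)) {f : (Fin (n+1) → ℝ) → ℝ} {Ω : Set (Fin (n+1) → ℝ)}
    (hΩ : IsOpen Ω) {p q : WithTop ℕ∞} (hf : ContDiffOn ℝ q f Ω) (hpq : p + 1 ≤ q) (i : Fin n)
    (hp : p ≤ ((⊤ : ℕ∞) : WithTop ℕ∞)) :
    ContDiffOn ℝ p (Xop A i f) Ω :=
  (pd_contDiffOn hΩ hf hpq _).add
    (((hA i).of_le hp).contDiffOn.mul (pd_contDiffOn hΩ hf hpq _))

lemma Xop_congr {n : ℕ} {A : Fin n → (Fin (n + 1) → ℝ) → ℝ} (p : Fin n)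
    {f g : (Fin (n+1) → ℝ) → ℝ} {x : Fin (n+1) → ℝ} (h : f =ᶠ[𝓝 x] g) :
    Xop A p f x = Xop A p g x := by
  unfold Xop
  rw [pd_congr h, pd_congr h]

lemma pd_Xop {n : ℕ} {A : Fin n → (Fin (n + 1) → ℝ) → ℝ}
    (hA : ∀ i, ContDiff ℝ (⊤ : ℕ∞) (A i)) {f : (Fin (n+1) → ℝ) → ℝ} {x : Fin (n+1) → ℝ}
    (hf : ContDiffAt ℝ 2 f x) (m : Fin (n+1)) (p : Fin n) :
    pd m (Xop A p f) x = pd m (pd p.castSucc f) x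
      + pd m (A p) x * pd (Fin.last n) f x + A p x * pd m (pd (Fin.last n) f) x := by
  have h1 : DifferentiableAt ℝ (pd p.castSucc f) x := pd_differentiableAt hf _
  have h2 : DifferentiableAt ℝ (pd (Fin.last n) f) x := pd_differentiableAt hf _
  have h3 : DifferentiableAt ℝ (A p) x := ((hA p).differentiable (by simp)).differentiableAt
  have hX : Xop A p f = fun y => pd p.castSucc f y + A p y * pd (Fin.last n) f y := rfl
  rw [hX, pd_add m h1 (h3.fun_mul h2), pd_mul m h3 h2]
  ring

lemma Xop_add_smul {n : ℕ} {A : Fin n → (Fin (n + 1) → ℝ) → ℝ} (p : Fin n)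
    {f g : (Fin (n+1) → ℝ) → ℝ} {x : Fin (n+1) → ℝ}
    (hf : DifferentiableAt ℝ f x) (hg : DifferentiableAt ℝ g x) (r : ℝ) :
    Xop A p (fun y => f y + r * g y) x = Xop A p f x + r * Xop A p g x := by
  unfold Xop
  rw [pd_add _ hf (hg.const_mul r), pd_add _ hf (hg.const_mul r),
    pd_const_mul _ hg r, pd_const_mul _ hg r]
  ring

theorem stmt15 (n : ℕ) (Ω : Set (Fin (n + 1) → ℝ)) (hΩ : IsOpen Ω)
    (A : Fin n → (Fin (n + 1) → ℝ) → ℝ)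
    (hA : ∀ i, ContDiff ℝ (⊤ : ℕ∞) (A i))
    (hdep : ∀ i (x y : Fin (n + 1) → ℝ),
      (∀ j : Fin n, x j.castSucc = y j.castSucc) → A i x = A i y)
    (c : Fin n → Fin n → ℝ)
    (hc : ∀ i j x, pd i.castSucc (A j) x - pd j.castSucc (A i) x = c i j)
    (u : (Fin (n + 1) → ℝ) → ℝ) (hu : ContDiffOn ℝ 3 u Ω)
    (a : Fin n → (Fin (n + 1) → ℝ) → ℝ) (ha : ∀ j, ContDiffOn ℝ 2 (a j) Ω)
    (hXu : ∀ j, ∀ x ∈ Ω, Xop A j u x = a j x) :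
    ∀ i j k : Fin n, ∀ x ∈ Ω,
      Xop A k (Xop A i (a j)) x - Xop A k (Xop A j (a i)) x
        = c i j * pd (Fin.last n) (a k) x := by
  have hA0 : ∀ (p : Fin n) (y : Fin (n+1) → ℝ), pd (Fin.last n) (A p) y = 0 := fun p y =>
    pd_last_zero ((hA p).differentiable (by simp)) (hdep p) y
  -- eventual equality of a_m and X_m u near points of Ω
  have hev : ∀ (p : Fin n), ∀ x ∈ Ω, a p =ᶠ[𝓝 x] Xop A p u := by
    intro p x hx
    exact eventually_of_mem (hΩ.mem_nhds hx) (fun y hy => (hXu p y hy).symm)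
  -- C² at points of Ω
  have hu2 : ∀ x ∈ Ω, ContDiffAt ℝ 2 u x := fun x hx =>
    (hu.contDiffAt (hΩ.mem_nhds hx)).of_le (by norm_num)
  -- the commutator identity for u
  have comm : ∀ (p q : Fin n), ∀ x ∈ Ω,
      Xop A p (Xop A q u) x - Xop A q (Xop A p u) x
        = c p q * pd (Fin.last n) u x := by
    intro p q x hx
    have hf := hu2 x hx
    have e1 : Xop A p (Xop A q u) x
        = pd p.castSucc (Xop A q u) x + A p x * pd (Fin.last n) (Xop A q u) x := rfl
    have e2 : Xop A q (Xop A p u) x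
        = pd q.castSucc (Xop A p u) x + A q x * pd (Fin.last n) (Xop A p u) x := rfl
    rw [e1, e2, pd_Xop hA hf _ q, pd_Xop hA hf _ q, pd_Xop hA hf _ p, pd_Xop hA hf _ p,
      hA0 p x, hA0 q x,
      pd_symm hf p.castSucc q.castSucc,
      pd_symm hf p.castSucc (Fin.last n),
      pd_symm hf q.castSucc (Fin.last n)]
    linear_combination (pd (Fin.last n) u x) * hc p q x
  -- X_k commutes with ∂_last on u
  have commD : ∀ (p : Fin n), ∀ x ∈ Ω,
      Xop A p (pd (Fin.last n) u) x = pd (Fin.last n) (Xop A p u) x := by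
    intro p x hx
    have hf := hu2 x hx
    have e1 : Xop A p (pd (Fin.last n) u) x
        = pd p.castSucc (pd (Fin.last n) u) x
          + A p x * pd (Fin.last n) (pd (Fin.last n) u) x := rfl
    rw [e1, pd_Xop hA hf _ p, hA0 p x, pd_symm hf p.castSucc (Fin.last n)]
    ring
  intro i j k x hx
  have hstep : ∀ (p q : Fin n), Xop A p (a q) =ᶠ[𝓝 x] Xop A p (Xop A q u) := by
    intro p q
    exact eventually_of_mem (hΩ.mem_nhds hx)
      (fun y hy => Xop_congr p (hev q y hy))
  have h1 : Xop A k (Xop A i (a j)) x = Xop A k (Xop A i (Xop A j u)) x :=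
    Xop_congr k (hstep i j)
  have h2 : Xop A k (Xop A j (a i)) x = Xop A k (Xop A j (Xop A i u)) x :=
    Xop_congr k (hstep j i)
  rw [h1, h2]
  -- F =ᶠ G + c i j * pd_last u near x
  have hFG : Xop A i (Xop A j u)
      =ᶠ[𝓝 x] (fun y => Xop A j (Xop A i u) y + c i j * pd (Fin.last n) u y) := by
    refine eventually_of_mem (hΩ.mem_nhds hx) (fun y hy => ?_)
    have := comm i j y hy
    show Xop A i (Xop A j u) y = Xop A j (Xop A i u) y + c i j * pd (Fin.last n) u y
    linarith
  rw [Xop_congr k hFG]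
  -- differentiability of G and pd_last u at x
  have hG : DifferentiableAt ℝ (Xop A j (Xop A i u)) x := by
    have h1 : ContDiffOn ℝ 2 (Xop A i u) Ω := Xop_contDiffOn hA hΩ hu (by norm_num) i (WithTop.coe_le_coe.mpr le_top)
    have h2 : ContDiffOn ℝ 1 (Xop A j (Xop A i u)) Ω :=
      Xop_contDiffOn hA hΩ h1 (by norm_num) j (by exact_mod_cast le_top)
    exact (h2.contDiffAt (hΩ.mem_nhds hx)).differentiableAt one_ne_zero
  have hDu : DifferentiableAt ℝ (pd (Fin.last n) u) x :=
    pd_differentiableAt (hu2 x hx) _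
  rw [Xop_add_smul k hG hDu (c i j), commD k x hx]
  have hlast : pd (Fin.last n) (Xop A k u) x = pd (Fin.last n) (a k) x :=
    (pd_congr (hev k x hx)).symm
  rw [hlast]
  ring
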